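/- Let G be a finite simple connected graph of order n and size m, with n_e vertices of even degree. Then γ^NN_s(G) ≥ √(2m + n + n_e) − n. -/
import Mathlib

open Finset

/-- The closed neighborhood of `v` in `G`, as a `Finset`. -/
def closedNbr {V : Type*} [Fintype V] [DecidableEq V] (G : SimpleGraph V) [DecidableRel G.Adj]
    (v : V) : Finset V := insert v (G.neighborFinset v)

/-- `f` is a nonnegative signed dominating function of `G`:
`f : V → {-1, 1}` and `∑_{u ∈ N[v]} f(u) ≥ 0` for every vertex `v`. -/
def IsNNSDF {V : Type*} [Fintype V] [DecidableEq V] (G : SimpleGraph V) [DecidableRel G.Adj]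
    (f : V → ℤ) : Prop :=
  (∀ v, f v = 1 ∨ f v = -1) ∧ ∀ v, 0 ≤ ∑ u ∈ closedNbr G v, f u

/-- The nonnegative signed domination number `γ^NN_s(G)`. -/
noncomputable def gammaNNs {V : Type*} [Fintype V] [DecidableEq V] (G : SimpleGraph V)
    [DecidableRel G.Adj] : ℤ :=
  sInf {w : ℤ | ∃ f : V → ℤ, IsNNSDF G f ∧ w = ∑ v, f v}

lemma closedNbr_card {V : Type*} [Fintype V] [DecidableEq V] (G : SimpleGraph V)
    [DecidableRel G.Adj] (v : V) : (closedNbr G v).card = G.degree v + 1 := by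
  rw [closedNbr, card_insert_of_notMem (by simp), SimpleGraph.card_neighborFinset_eq_degree]

lemma closedNbr_symm {V : Type*} [Fintype V] [DecidableEq V] (G : SimpleGraph V)
    [DecidableRel G.Adj] (u v : V) : u ∈ closedNbr G v ↔ v ∈ closedNbr G u := by
  simp only [closedNbr, mem_insert, SimpleGraph.mem_neighborFinset]
  constructor <;> rintro (rfl | h)
  · left; rfl
  · right; exact h.symm
  · left; rfl
  · right; exact h.symm

lemma NNSDF_key {V : Type*} [Fintype V] [DecidableEq V] (G : SimpleGraph V)
    [DecidableRel G.Adj] (f : V → ℤ) (hf : IsNNSDF G f) :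
    0 ≤ (∑ v, f v) + (Fintype.card V : ℤ) ∧
    2 * (G.edgeFinset.card : ℤ) + (Fintype.card V : ℤ) +
      ((univ.filter fun v => Even (G.degree v)).card : ℤ)
      ≤ ((∑ v, f v) + (Fintype.card V : ℤ))^2 := by
  classical
  -- sum over any finset in terms of number of +1 vertices
  have hsplit : ∀ s : Finset V,
      ∑ u ∈ s, f u = 2 * ((s.filter fun u => f u = 1).card : ℤ) - s.card := by
    intro s
    have h1 : ∑ u ∈ s, (f u + 1) = 2 * ((s.filter fun u => f u = 1).card : ℤ) := by
      calc ∑ u ∈ s, (f u + 1)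
          = ∑ u ∈ s, (if f u = 1 then (2 : ℤ) else 0) :=
            Finset.sum_congr rfl fun u _ => by rcases hf.1 u with h | h <;> simp [h]
        _ = ∑ u ∈ s.filter fun u => f u = 1, (2 : ℤ) := (Finset.sum_filter _ _).symm
        _ = 2 * ((s.filter fun u => f u = 1).card : ℤ) := by
            rw [Finset.sum_const]; push_cast; ring
    have h2 : ∑ u ∈ s, (f u + 1) = (∑ u ∈ s, f u) + s.card := by
      rw [Finset.sum_add_distrib, Finset.sum_const]; push_cast; ring
    omega
  set P : Finset V := univ.filter fun u => f u = 1 with hP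
  set p : ℕ := P.card with hp
  -- total weight
  have hW : ∑ v, f v = 2 * (p : ℤ) - Fintype.card V := by
    have := hsplit univ
    simpa [hP, hp, Finset.card_univ] using this
  -- for each v : deg v + 1 ≤ 2 p
  have hdeg : ∀ v : V, (G.degree v : ℤ) + 1 ≤ 2 * (p : ℤ) := by
    intro v
    have h0 := hf.2 v
    rw [hsplit (closedNbr G v)] at h0
    have hc : ((closedNbr G v).filter fun u => f u = 1).card ≤ p := by
      apply Finset.card_le_card
      exact Finset.filter_subset_filter _ (Finset.subset_univ _)
    have hcard := closedNbr_card G v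
    have : ((closedNbr G v).card : ℤ) = (G.degree v : ℤ) + 1 := by exact_mod_cast hcard
    omega
  -- each even-degree vertex has closed-neighborhood sum ≥ 1
  have hodd : ∀ v : V, Even (G.degree v) → 1 ≤ ∑ u ∈ closedNbr G v, f u := by
    intro v hv
    have h0 := hf.2 v
    have h1 := hsplit (closedNbr G v)
    have hcard := closedNbr_card G v
    obtain ⟨k, hk⟩ := hv
    have : ((closedNbr G v).card : ℤ) = (G.degree v : ℤ) + 1 := by exact_mod_cast hcard
    have hdk : (G.degree v : ℤ) = k + k := by exact_mod_cast hk
    omega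
  -- double counting
  have hdc : ∑ v, ∑ u ∈ closedNbr G v, f u = ∑ u, ((G.degree u : ℤ) + 1) * f u := by
    calc ∑ v, ∑ u ∈ closedNbr G v, f u
        = ∑ v, ∑ u, if u ∈ closedNbr G v then f u else 0 := by
          refine Finset.sum_congr rfl fun v _ => ?_
          rw [Finset.sum_ite_mem, Finset.univ_inter]
      _ = ∑ u, ∑ v, if u ∈ closedNbr G v then f u else 0 := Finset.sum_comm
      _ = ∑ u, ∑ v, if v ∈ closedNbr G u then f u else 0 := by
          refine Finset.sum_congr rfl fun u _ => Finset.sum_congr rfl fun v _ => if_congr (closedNbr_symm G u v) rfl rfl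
      _ = ∑ u, ((G.degree u : ℤ) + 1) * f u := by
          refine Finset.sum_congr rfl fun u _ => ?_
          rw [Finset.sum_ite_mem, Finset.univ_inter, Finset.sum_const, closedNbr_card]
          push_cast; ring
  -- lower bound for the double sum by the number of even-degree vertices
  have hlow : ((univ.filter fun v => Even (G.degree v)).card : ℤ)
      ≤ ∑ v, ∑ u ∈ closedNbr G v, f u := by
    rw [← Finset.sum_filter_add_sum_filter_not univ (fun v => Even (G.degree v))]
    have h1 : ((univ.filter fun v => Even (G.degree v)).card : ℤ)
        ≤ ∑ v ∈ univ.filter fun v => Even (G.degree v), ∑ u ∈ closedNbr G v, f u := by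
      calc ((univ.filter fun v => Even (G.degree v)).card : ℤ)
          = ∑ v ∈ univ.filter fun v => Even (G.degree v), (1 : ℤ) := by
            rw [Finset.sum_const]; push_cast; ring
        _ ≤ _ := Finset.sum_le_sum fun v hv => hodd v (by simpa using hv)
    have h2 : (0 : ℤ) ≤ ∑ v ∈ univ.filter fun v => ¬ Even (G.degree v),
        ∑ u ∈ closedNbr G v, f u :=
      Finset.sum_nonneg fun v _ => hf.2 v
    linarith
  -- rewrite the weighted sum via P
  have hwt : ∑ u, ((G.degree u : ℤ) + 1) * f u
      = 2 * (∑ u ∈ P, ((G.degree u : ℤ) + 1)) - (∑ u, ((G.degree u : ℤ) + 1)) := by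
    rw [← Finset.sum_filter_add_sum_filter_not univ (fun u => f u = 1)
      (fun u => ((G.degree u : ℤ) + 1) * f u)]
    have hA : ∑ u ∈ univ.filter fun u => f u = 1, ((G.degree u : ℤ) + 1) * f u
        = ∑ u ∈ P, ((G.degree u : ℤ) + 1) := by
      refine Finset.sum_congr rfl fun u hu => ?_
      rw [Finset.mem_filter] at hu
      rw [hu.2]; ring
    have hB : ∑ u ∈ univ.filter fun u => ¬ f u = 1, ((G.degree u : ℤ) + 1) * f u
        = - ∑ u ∈ univ.filter fun u => ¬ f u = 1, ((G.degree u : ℤ) + 1) := by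
      rw [← Finset.sum_neg_distrib]
      refine Finset.sum_congr rfl fun u hu => ?_
      rw [Finset.mem_filter] at hu
      have : f u = -1 := (hf.1 u).resolve_left hu.2
      rw [this]; ring
    have hC : (∑ u ∈ P, ((G.degree u : ℤ) + 1))
        + ∑ u ∈ univ.filter fun u => ¬ f u = 1, ((G.degree u : ℤ) + 1)
        = ∑ u, ((G.degree u : ℤ) + 1) :=
      Finset.sum_filter_add_sum_filter_not univ (fun u => f u = 1) _
    rw [hA, hB]; linarith
  -- handshake
  have hhs : ∑ u, ((G.degree u : ℤ) + 1)
      = 2 * (G.edgeFinset.card : ℤ) + (Fintype.card V : ℤ) := by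
    rw [Finset.sum_add_distrib, Finset.sum_const, Finset.card_univ]
    have := G.sum_degrees_eq_twice_card_edges
    have h : ∑ u, (G.degree u : ℤ) = 2 * (G.edgeFinset.card : ℤ) := by
      exact_mod_cast congrArg (Nat.cast : ℕ → ℤ) this
    rw [h]; push_cast; ring
  -- bound ∑_{u ∈ P} (deg u + 1) ≤ 2 p^2
  have hPbound : ∑ u ∈ P, ((G.degree u : ℤ) + 1) ≤ 2 * (p : ℤ) * p := by
    calc ∑ u ∈ P, ((G.degree u : ℤ) + 1) ≤ ∑ _u ∈ P, 2 * (p : ℤ) :=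
          Finset.sum_le_sum fun u _ => hdeg u
      _ = 2 * (p : ℤ) * p := by rw [Finset.sum_const, ← hp]; push_cast; ring
  constructor
  · rw [hW]; have : (0 : ℤ) ≤ p := Int.natCast_nonneg p; linarith [hW]
  · have : ((∑ v, f v) + (Fintype.card V : ℤ)) = 2 * (p : ℤ) := by rw [hW]; ring
    rw [this]
    have hchain : 2 * (G.edgeFinset.card : ℤ) + (Fintype.card V : ℤ) +
        ((univ.filter fun v => Even (G.degree v)).card : ℤ)
        ≤ 2 * (∑ u ∈ P, ((G.degree u : ℤ) + 1)) := by
      have := hlow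
      rw [hdc, hwt, hhs] at this
      linarith
    nlinarith [hPbound]

/-- For a finite simple connected graph `G` of order `n`, size `m` and `n_e`
even-degree vertices, `γ^NN_s(G) ≥ √(2m + n + n_e) - n`. -/
theorem gammaNNs_lower_bound_5 {V : Type*} [Fintype V] [DecidableEq V]
    (G : SimpleGraph V) [DecidableRel G.Adj] (hconn : G.Connected)
    (n m nₑ : ℕ) (hn : n = Fintype.card V) (hm : m = G.edgeFinset.card)
    (hne : nₑ = (univ.filter fun v => Even (G.degree v)).card) :
    Real.sqrt (2 * (m : ℝ) + n + nₑ) - n ≤ (gammaNNs G : ℝ) := by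
  classical
  set S : Set ℤ := {w : ℤ | ∃ f : V → ℤ, IsNNSDF G f ∧ w = ∑ v, f v} with hS
  have hne' : S.Nonempty := by
    refine ⟨∑ v : V, (1 : ℤ), fun _ => 1, ⟨fun v => Or.inl rfl, fun v => ?_⟩, rfl⟩
    simp
  have hbdd : BddBelow S := by
    refine ⟨-(Fintype.card V : ℤ), fun w hw => ?_⟩
    obtain ⟨f, hf, rfl⟩ := hw
    have : ∑ v : V, (-1 : ℤ) ≤ ∑ v, f v :=
      Finset.sum_le_sum fun v _ => by rcases hf.1 v with h | h <;> simp [h]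
    simpa using this
  have hmem : gammaNNs G ∈ S := Int.csInf_mem hne' hbdd
  obtain ⟨f, hf, hWeq⟩ := hmem
  obtain ⟨h0, hkey⟩ := NNSDF_key G f hf
  set W : ℤ := ∑ v, f v with hWdef
  have h0' : (0 : ℝ) ≤ (W : ℝ) + n := by
    rw [hn]; exact_mod_cast h0
  have hkey' : 2 * (m : ℝ) + n + nₑ ≤ ((W : ℝ) + n)^2 := by
    rw [hn, hm, hne]; exact_mod_cast hkey
  have hsq : Real.sqrt (2 * (m : ℝ) + n + nₑ) ≤ (W : ℝ) + n := by
    calc Real.sqrt (2 * (m : ℝ) + n + nₑ) ≤ Real.sqrt (((W : ℝ) + n)^2) :=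
          Real.sqrt_le_sqrt hkey'
      _ = (W : ℝ) + n := Real.sqrt_sq h0'
  rw [hWeq]
  linarith
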